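/- Let G be a finite connected simple graph with at least one edge that does not have the strict 1-density property. Then a minimal 1-densest subgraph H₀ of G exists, every such H₀ is a proper subgraph of G (H₀ ≠ G), every such H₀ itself has the strict 1-density property, and every such H₀ is homogeneous. -/

import Mathlib

open scoped Classical

noncomputable section

variable {V : Type*} [Fintype V] [DecidableEq V]

/-- `T` is (the edge set of) a spanning tree of the vertex-induced subgraph of `G`
on the vertex set `S`: its edges are edges of `G` with both endpoints in `S`,
it is acyclic, and every two vertices of `S` are joined by a path using edges of `T`. -/
def IsSpanningTreeOn (G : SimpleGraph V) (S : Finset V) (T : Finset (Sym2 V)) : Prop :=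
  (↑T : Set (Sym2 V)) ⊆ G.edgeSet ∧ (∀ e ∈ T, ∀ v ∈ e, v ∈ S) ∧
    (SimpleGraph.fromEdgeSet (↑T : Set (Sym2 V))).IsAcyclic ∧
    ∀ u ∈ S, ∀ w ∈ S, (SimpleGraph.fromEdgeSet (↑T : Set (Sym2 V))).Reachable u w

/-- A probability mass function on the spanning trees of the induced subgraph of `G` on `S`. -/
structure TreePMFOn (G : SimpleGraph V) (S : Finset V) where
  toFun : Finset (Sym2 V) → ℝ
  nonneg : ∀ T, 0 ≤ toFun T
  supp : ∀ T, toFun T ≠ 0 → IsSpanningTreeOn G S T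
  sum_one : ∑ T : Finset (Sym2 V), toFun T = 1

/-- Edge probability `η_μ(e)`. -/
def edgeProbOn {G : SimpleGraph V} {S : Finset V} (μ : TreePMFOn G S) (e : Sym2 V) : ℝ :=
  ∑ T : Finset (Sym2 V), if e ∈ T then μ.toFun T else 0

/-- Edges of `G` with both endpoints in `S`. -/
def inducedEdges (G : SimpleGraph V) (S : Finset V) : Finset (Sym2 V) :=
  G.edgeFinset.filter fun e => ∀ v ∈ e, v ∈ S

/-- Variance of the edge probabilities of `μ` over the edges within `S`. -/
def edgeVarOn {G : SimpleGraph V} {S : Finset V} (μ : TreePMFOn G S) : ℝ :=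
  (∑ e ∈ inducedEdges G S, (edgeProbOn μ e) ^ 2) / ((inducedEdges G S).card : ℝ) -
    ((∑ e ∈ inducedEdges G S, edgeProbOn μ e) / ((inducedEdges G S).card : ℝ)) ^ 2

/-- A pmf is fair if it minimizes the variance of the edge probabilities. -/
def IsFairOn {G : SimpleGraph V} {S : Finset V} (μ : TreePMFOn G S) : Prop :=
  ∀ ν : TreePMFOn G S, edgeVarOn μ ≤ edgeVarOn ν

/-- A fair tree: a spanning tree in the support of some fair pmf. -/
def IsFairTreeOn (G : SimpleGraph V) (S : Finset V) (T : Finset (Sym2 V)) : Prop :=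
  ∃ μ : TreePMFOn G S, IsFairOn μ ∧ μ.toFun T ≠ 0

/-- The 1-density `θ(H) = |E(H)|/(|V(H)|-1)` of the induced subgraph on `S`. -/
def density (G : SimpleGraph V) (S : Finset V) : ℝ :=
  ((inducedEdges G S).card : ℝ) / ((S.card : ℝ) - 1)

/-- `S` induces a member of `H(G)`: connected, vertex-induced, with at least one edge. -/
def InH (G : SimpleGraph V) (S : Finset V) : Prop :=
  (inducedEdges G S).Nonempty ∧ (G.induce (↑S : Set V)).Connected

/-- `S` induces a 1-densest subgraph of `G`. -/
def IsDensest (G : SimpleGraph V) (S : Finset V) : Prop :=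
  InH G S ∧ ∀ S' : Finset V, InH G S' → density G S' ≤ density G S

/-- `S` induces a minimal 1-densest subgraph of `G`. -/
def IsMinimalDensest (G : SimpleGraph V) (S : Finset V) : Prop :=
  IsDensest G S ∧ ∀ S' : Finset V, S' ⊆ S → S' ≠ S → ¬ IsDensest G S'

/-- The induced subgraph on `S` is homogeneous: some pmf on its spanning trees
has constant edge probabilities. -/
def IsHomogeneousOn (G : SimpleGraph V) (S : Finset V) : Prop :=
  ∃ μ : TreePMFOn G S, ∃ c : ℝ, ∀ e ∈ inducedEdges G S, edgeProbOn μ e = c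

/-- The induced subgraph on `S` has the strict 1-density property. -/
def StrictDensityOn (G : SimpleGraph V) (S : Finset V) : Prop :=
  ∀ S' : Finset V, S' ⊆ S → InH G S' → S' ≠ S → density G S' < density G S


/-!
Homogeneity of a densest `S`: take a pmf `μ` on the spanning trees of `S` minimising
`∑ₑ η_μ(e)²`. Testing optimality against point masses shows that every tree in the support of `μ`
is a minimum spanning tree for the weights `η_μ`. Let `m` be the least edge probability and `C` a
component of the graph formed by the edges of probability `m`. By the cycle property, every
support tree restricts to a spanning tree of `C` on those edges, so averaging over `μ` gives
`|C| - 1 = m ⋅ #{edges of probability m in C} ≤ m ⋅ |E(C)|`, i.e. `m ⋅ θ(C) ≥ 1`. As `S` is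
densest, `m ⋅ |E(S)| ≥ |S| - 1 = ∑ₑ η_μ(e)`, which forces `η_μ ≡ m`.

The remaining claims are extremal arguments: a densest set of least size is minimal densest,
minimality forces the strict density property, and hence a minimal densest set is not all of `V`
when `G` fails that property.
-/

open SimpleGraph

namespace SimpleGraph

variable {α : Type*} {H H' : SimpleGraph α}

lemma Reachable.of_forall_adj_reachable (h : ∀ u v, H.Adj u v → H'.Reachable u v) {u w : α}
    (huw : H.Reachable u w) : H'.Reachable u w := by
  rw [reachable_iff_reflTransGen] at huw
  induction huw with
  | refl => rfl
  | tail _ hadj ih => exact ih.trans (h _ _ hadj)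

lemma Reachable.induce_of_closed {s : Set α} (hs : ∀ u v, H.Adj u v → u ∈ s → v ∈ s) {u w : α}
    (hu : u ∈ s) (hw : w ∈ s) (huw : H.Reachable u w) :
    (H.induce s).Reachable ⟨u, hu⟩ ⟨w, hw⟩ := by
  obtain ⟨p⟩ := huw
  induction p with
  | nil => rfl
  | cons hadj p ih => exact (Adj.reachable (induce_adj.mpr hadj)).trans (ih (hs _ _ hadj hu) hw)

lemma Walk.mem_of_mem_edges {s : Set (Sym2 α)} {u v : α} (p : (fromEdgeSet s).Walk u v)
    {e : Sym2 α} (he : e ∈ p.edges) : e ∈ s := by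
  have := p.edges_subset_edgeSet he
  rw [edgeSet_fromEdgeSet] at this
  exact this.1

lemma IsAcyclic.not_reachable_deleteEdges {a b : α} {e : Sym2 α} (hH : H.IsAcyclic)
    {p : H.Walk a b} (hp : p.IsPath) (he : e ∈ p.edges) : ¬ (H.deleteEdges {e}).Reachable a b := by
  classical
  rintro ⟨q⟩
  have hpq := (hH.subsingleton_path a b).elim ⟨p, hp⟩ (q.mapLe (deleteEdges_le _)).toPath
  have heq : e ∈ q.edges := by
    rw [← Walk.edges_mapLe_eq_edges (deleteEdges_le _)]
    exact Walk.edges_toPath_subset_edges _ (congrArg Subtype.val hpq ▸ he)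
  simpa using q.edges_subset_edgeSet heq

lemma deleteEdges_sup_edge_comm {a b : α} {e : Sym2 α} (he : e ≠ s(a, b)) :
    (H ⊔ edge a b).deleteEdges {e} = H.deleteEdges {e} ⊔ edge a b := by
  rw [deleteEdges_sup]
  congr 1
  ext u v
  simp only [deleteEdges_adj, edge_adj, Set.mem_singleton_iff]
  refine ⟨fun h => h.1, fun ⟨huv, hne⟩ => ⟨⟨huv, hne⟩, fun h => he ?_⟩⟩
  rcases huv with ⟨rfl, rfl⟩ | ⟨rfl, rfl⟩
  · exact h.symm
  · exact h.symm.trans Sym2.eq_swap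

lemma Reachable.deleteEdges_sup_edge {a b : α} {e : Sym2 α} {p : H.Walk a b} (hp : p.IsPath)
    (he : e ∈ p.edges) (hab : a ≠ b) (hnadj : ¬ H.Adj a b) {u w : α} (huw : H.Reachable u w) :
    ((H ⊔ edge a b).deleteEdges {e}).Reachable u w := by
  have hba : (H ⊔ edge a b).Adj b a := .inr ((edge_adj _ _ _ _).mpr ⟨.inr ⟨rfl, rfl⟩, hab.symm⟩)
  have hcycle : (Walk.cons hba (p.mapLe le_sup_left)).IsCycle := by
    rw [Walk.cons_isCycle_iff, Walk.edges_mapLe_eq_edges]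
    exact ⟨hp.mapLe _, fun h => hnadj (p.adj_of_mem_edges h).symm⟩
  cases e with | h x y =>
  have hxy := ((adj_and_reachable_delete_edges_iff_exists_cycle (v := x) (w := y)).mpr
    ⟨b, _, hcycle, by simp [he]⟩).2
  refine (huw.mono (le_sup_left : H ≤ H ⊔ edge a b)).of_forall_adj_reachable fun v v' hvv' => ?_
  by_cases hedge : s(v, v') = s(x, y)
  · rcases Sym2.eq_iff.mp hedge with ⟨rfl, rfl⟩ | ⟨rfl, rfl⟩
    · exact hxy
    · exact hxy.symm
  · exact Adj.reachable (deleteEdges_adj.mpr ⟨hvv', hedge⟩)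

lemma ConnectedComponent.connected_induce_supp_of_le {G : SimpleGraph α} (hle : H ≤ G)
    (C : H.ConnectedComponent) : (G.induce C.supp).Connected :=
  C.maximal_connected_induce_supp.1.mono fun _ _ h => hle h

lemma induce_fromEdgeSet_congr {R : Set α} {s t : Set (Sym2 α)}
    (h : ∀ u ∈ R, ∀ w ∈ R, (s(u, w) ∈ s ↔ s(u, w) ∈ t)) :
    (fromEdgeSet s).induce R = (fromEdgeSet t).induce R := by
  ext ⟨u, hu⟩ ⟨w, hw⟩
  simp [fromEdgeSet_adj, h u hu w hw]

lemma fromEdgeSet_insert_erase [DecidableEq α] (A : Finset (Sym2 α)) (a b : α) (e : Sym2 α) :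
    fromEdgeSet (↑(insert s(a, b) (A.erase e)) : Set (Sym2 α)) =
      (fromEdgeSet (↑A : Set (Sym2 α))).deleteEdges {e} ⊔ edge a b := by
  rw [Finset.coe_insert, Finset.coe_erase, deleteEdges, ← fromEdgeSet_sdiff, edge,
    ← fromEdgeSet_union, Set.insert_eq, Set.union_comm]

end SimpleGraph

section SpanningTree

variable {α : Type*} {G : SimpleGraph α} {S : Finset α} {T : Finset (Sym2 α)}

lemma card_add_one_of_isTree_induce [Fintype α] {A : Finset (Sym2 α)} {R : Finset α}
    (hdiag : ∀ e ∈ A, ¬ e.IsDiag) (hAR : ∀ e ∈ A, ∀ v ∈ e, v ∈ R)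
    (htree : ((fromEdgeSet (↑A : Set (Sym2 α))).induce (↑R : Set α)).IsTree) :
    A.card + 1 = R.card := by
  classical
  have hsupp : (fromEdgeSet (↑A : Set (Sym2 α))).support ⊆ ↑R := by
    rintro v ⟨w, hvw⟩
    exact hAR _ ((fromEdgeSet_adj _).mp hvw).1 v (Sym2.mem_mk_left v w)
  have hedges : (fromEdgeSet (↑A : Set (Sym2 α))).edgeFinset = A := by
    ext e
    simp only [mem_edgeFinset, edgeSet_fromEdgeSet, Set.mem_sdiff, Finset.mem_coe,
      Sym2.mem_diagSet]
    exact ⟨fun h => h.1, fun h => ⟨h, hdiag e h⟩⟩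
  -- `convert` only reconciles the `Fintype` instances on the edge sets.
  convert htree.card_edgeFinset using 2
  · rw [← hedges]
    convert (card_edgeFinset_induce_of_support_subset hsupp).symm
  · simp

lemma IsSpanningTreeOn.mem_of_adj (hT : IsSpanningTreeOn G S T) {u v : α}
    (h : (fromEdgeSet (↑T : Set (Sym2 α))).Adj u v) : v ∈ S :=
  hT.2.1 _ ((fromEdgeSet_adj _).mp h).1 v (Sym2.mem_mk_right u v)

lemma IsSpanningTreeOn.isTree_induce (hT : IsSpanningTreeOn G S T) (hS : S.Nonempty) :
    ((fromEdgeSet (↑T : Set (Sym2 α))).induce (↑S : Set α)).IsTree := by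
  refine ⟨(connected_iff _).mpr ⟨fun ⟨u, hu⟩ ⟨w, hw⟩ => ?_, hS.coe_sort⟩, hT.2.2.1.induce _⟩
  exact (hT.2.2.2 u hu w hw).induce_of_closed (fun _ _ h _ => hT.mem_of_adj h) hu hw

lemma IsSpanningTreeOn.card_add_one [Fintype α] (hT : IsSpanningTreeOn G S T) (hS : S.Nonempty) :
    T.card + 1 = S.card :=
  card_add_one_of_isTree_induce (fun _ he => G.not_isDiag_of_mem_edgeSet (hT.1 he)) hT.2.1
    (hT.isTree_induce hS)

lemma exists_isSpanningTreeOn [Fintype α] (hS : (G.induce (↑S : Set α)).Connected) :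
    ∃ T, IsSpanningTreeOn G S T := by
  classical
  set K := (G.induce (↑S : Set α)).map (Function.Embedding.subtype _)
  have hKS : ∀ {u v}, K.Adj u v → u ∈ S ∧ v ∈ S := by
    intro _ _ h
    obtain ⟨u, v, -, rfl, rfl⟩ := (map_adj _ _ _ _).mp h
    exact ⟨u.2, v.2⟩
  obtain ⟨F, hFK, hFac, hFreach⟩ := K.exists_isAcyclic_reachable_eq_le
  refine ⟨F.edgeFinset, ?_, ?_, ?_, ?_⟩
  · rw [coe_edgeFinset]
    exact edgeSet_mono (hFK.trans (map_comap_le _ _))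
  · intro e he v hv
    cases e with | h x y =>
    have hxy := hKS (hFK (mem_edgeFinset.mp he))
    rcases Sym2.mem_iff.mp hv with rfl | rfl
    exacts [hxy.1, hxy.2]
  · rwa [coe_edgeFinset, fromEdgeSet_edgeSet]
  · intro u hu w hw
    rw [coe_edgeFinset, fromEdgeSet_edgeSet, hFreach]
    exact (hS.preconnected ⟨u, hu⟩ ⟨w, hw⟩).map (Embedding.map _ _).toHom

end SpanningTree

section MinSpanningTree

variable {G : SimpleGraph V} {S : Finset V} {T : Finset (Sym2 V)}

lemma IsSpanningTreeOn.subset_inducedEdges (hT : IsSpanningTreeOn G S T) :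
    T ⊆ inducedEdges G S :=
  fun e he => Finset.mem_filter.mpr ⟨mem_edgeFinset.mpr (hT.1 he), hT.2.1 e he⟩

lemma IsSpanningTreeOn.exchange (hT : IsSpanningTreeOn G S T) {a b : V} {e : Sym2 V}
    {p : (fromEdgeSet (↑T : Set (Sym2 V))).Walk a b} (hp : p.IsPath) (he : e ∈ p.edges)
    (hab : s(a, b) ∈ inducedEdges G S) (habT : s(a, b) ∉ T) :
    IsSpanningTreeOn G S (insert s(a, b) (T.erase e)) := by
  obtain ⟨habG, habS⟩ := Finset.mem_filter.mp hab
  have heT : e ∈ T := p.mem_of_mem_edges he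
  have hne : e ≠ s(a, b) := fun h => habT (h ▸ heT)
  have hnadj : ¬ (fromEdgeSet (↑T : Set (Sym2 V))).Adj a b :=
    fun h => habT ((fromEdgeSet_adj _).mp h).1
  refine ⟨?_, ?_, ?_, ?_⟩
  · intro f hf
    rcases Finset.mem_insert.mp hf with rfl | hf
    exacts [mem_edgeFinset.mp habG, hT.1 (Finset.mem_of_mem_erase hf)]
  · intro f hf
    rcases Finset.mem_insert.mp hf with rfl | hf
    exacts [habS, hT.2.1 f (Finset.mem_of_mem_erase hf)]
  · rw [fromEdgeSet_insert_erase]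
    exact (hT.2.2.1.anti (deleteEdges_le _)).sup_edge_of_not_reachable
      (hT.2.2.1.not_reachable_deleteEdges hp he)
  · intro u hu w hw
    rw [fromEdgeSet_insert_erase, ← deleteEdges_sup_edge_comm hne]
    exact (hT.2.2.2 u hu w hw).deleteEdges_sup_edge hp he (G.ne_of_adj (mem_edgeFinset.mp habG))
      hnadj

def IsMinSpanningTreeOn (G : SimpleGraph V) (S : Finset V) (x : Sym2 V → ℝ)
    (T : Finset (Sym2 V)) : Prop :=
  IsSpanningTreeOn G S T ∧ ∀ T', IsSpanningTreeOn G S T' → ∑ e ∈ T, x e ≤ ∑ e ∈ T', x e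

/-- The cycle property of minimum spanning trees. -/
lemma IsMinSpanningTreeOn.reachable_filter_le {x : Sym2 V → ℝ} (hT : IsMinSpanningTreeOn G S x T)
    {a b : V} (hab : s(a, b) ∈ inducedEdges G S) :
    (fromEdgeSet (↑(T.filter fun e => x e ≤ x s(a, b)) : Set (Sym2 V))).Reachable a b := by
  by_contra hnr
  have habS := (Finset.mem_filter.mp hab).2
  obtain ⟨p⟩ := hT.1.2.2.2 a (habS a (Sym2.mem_mk_left a b)) b (habS b (Sym2.mem_mk_right a b))
  obtain ⟨e, he, hxe⟩ : ∃ e ∈ p.toPath.1.edges, x s(a, b) < x e := by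
    by_contra! hlight
    refine hnr ⟨p.toPath.1.transfer _ fun e he => ?_⟩
    have he' := p.toPath.1.edges_subset_edgeSet he
    simp only [edgeSet_fromEdgeSet, Set.mem_sdiff, Finset.coe_filter, Set.mem_ofPred_eq] at he' ⊢
    exact ⟨⟨he'.1, hlight e he⟩, he'.2⟩
  have habT : s(a, b) ∉ T := fun h => hnr (Adj.reachable ((fromEdgeSet_adj _).mpr
    ⟨Finset.mem_filter.mpr ⟨h, le_rfl⟩,
      G.ne_of_adj (mem_edgeFinset.mp (Finset.mem_filter.mp hab).1)⟩))
  have heT : e ∈ T := p.toPath.1.mem_of_mem_edges he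
  have hle := hT.2 _ (hT.1.exchange p.toPath.2 he hab habT)
  rw [Finset.sum_insert (fun h => habT (Finset.mem_of_mem_erase h)),
    Finset.sum_erase_eq_sub heT] at hle
  linarith

lemma IsMinSpanningTreeOn.reachable_inter_of_reachable {x : Sym2 V → ℝ} {m : ℝ}
    (hT : IsMinSpanningTreeOn G S x T) (hm : ∀ e ∈ inducedEdges G S, m ≤ x e) {u w : V}
    (h : (fromEdgeSet (↑((inducedEdges G S).filter (x · = m)) : Set (Sym2 V))).Reachable u w) :
    (fromEdgeSet (↑(T ∩ (inducedEdges G S).filter (x · = m)) : Set (Sym2 V))).Reachable u w := by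
  refine h.of_forall_adj_reachable fun a b hab => ?_
  obtain ⟨habE, habm⟩ := Finset.mem_filter.mp ((fromEdgeSet_adj _).mp hab).1
  refine (hT.reachable_filter_le habE).mono (fromEdgeSet_mono (Finset.coe_subset.mpr ?_))
  intro e he
  obtain ⟨heT, hle⟩ := Finset.mem_filter.mp he
  have heE := hT.1.subset_inducedEdges heT
  exact Finset.mem_inter.mpr
    ⟨heT, Finset.mem_filter.mpr ⟨heE, le_antisymm (habm ▸ hle) (hm e heE)⟩⟩

end MinSpanningTree

section TreePMF

variable {G : SimpleGraph V} {S : Finset V} {T : Finset (Sym2 V)}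

namespace TreePMFOn

def dirac (hT : IsSpanningTreeOn G S T) : TreePMFOn G S where
  toFun T' := if T' = T then 1 else 0
  nonneg T' := by split_ifs <;> norm_num
  supp T' h := by
    by_cases hT' : T' = T
    · exact hT' ▸ hT
    · simp [hT'] at h
  sum_one := by simp

def mix (μ ν : TreePMFOn G S) (t : ℝ) (h0 : 0 ≤ t) (h1 : t ≤ 1) : TreePMFOn G S where
  toFun T := (1 - t) * μ.toFun T + t * ν.toFun T
  nonneg T := add_nonneg (mul_nonneg (by linarith) (μ.nonneg T)) (mul_nonneg h0 (ν.nonneg T))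
  supp T h := by
    by_cases hμ : μ.toFun T = 0
    · exact ν.supp T fun hν => h (by simp [hμ, hν])
    · exact μ.supp T hμ
  sum_one := by
    rw [Finset.sum_add_distrib, ← Finset.mul_sum, ← Finset.mul_sum, μ.sum_one, ν.sum_one]
    ring

end TreePMFOn

lemma edgeProbOn_dirac (hT : IsSpanningTreeOn G S T) (e : Sym2 V) :
    edgeProbOn (TreePMFOn.dirac hT) e = if e ∈ T then 1 else 0 := by
  simp only [edgeProbOn, TreePMFOn.dirac]
  rw [Finset.sum_eq_single T (fun T' _ hT' => by simp [hT']) (by simp)]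
  simp

lemma edgeProbOn_mix (μ ν : TreePMFOn G S) {t : ℝ} (h0 : 0 ≤ t) (h1 : t ≤ 1) (e : Sym2 V) :
    edgeProbOn (μ.mix ν t h0 h1) e = (1 - t) * edgeProbOn μ e + t * edgeProbOn ν e := by
  simp only [edgeProbOn, TreePMFOn.mix, Finset.mul_sum, ← Finset.sum_add_distrib]
  refine Finset.sum_congr rfl fun T _ => ?_
  split_ifs <;> ring

lemma edgeProbOn_nonneg (μ : TreePMFOn G S) (e : Sym2 V) : 0 ≤ edgeProbOn μ e :=
  Finset.sum_nonneg fun T _ => by split_ifs; exacts [μ.nonneg T, le_rfl]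

lemma sum_mul_edgeProbOn (μ : TreePMFOn G S) (B : Finset (Sym2 V)) (x : Sym2 V → ℝ) :
    ∑ e ∈ B, x e * edgeProbOn μ e = ∑ T, μ.toFun T * ∑ e ∈ B ∩ T, x e := by
  simp_rw [edgeProbOn, Finset.mul_sum, mul_ite, mul_zero]
  rw [Finset.sum_comm]
  refine Finset.sum_congr rfl fun T _ => ?_
  rw [Finset.sum_ite_mem]
  exact Finset.sum_congr rfl fun e _ => mul_comm _ _

lemma sum_mul_edgeProbOn_inducedEdges (μ : TreePMFOn G S) (x : Sym2 V → ℝ) :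
    ∑ e ∈ inducedEdges G S, x e * edgeProbOn μ e = ∑ T, μ.toFun T * ∑ e ∈ T, x e := by
  rw [sum_mul_edgeProbOn]
  refine Finset.sum_congr rfl fun T _ => ?_
  by_cases hT : μ.toFun T = 0
  · simp [hT]
  · rw [Finset.inter_eq_right.mpr (μ.supp T hT).subset_inducedEdges]

lemma sum_edgeProbOn_eq_of_card_inter {μ : TreePMFOn G S} {B : Finset (Sym2 V)} {k : ℝ}
    (h : ∀ T, μ.toFun T ≠ 0 → ((B ∩ T).card : ℝ) = k) : ∑ e ∈ B, edgeProbOn μ e = k := by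
  have hsum := sum_mul_edgeProbOn μ B 1
  simp only [Pi.one_apply, one_mul, Finset.sum_const, nsmul_one] at hsum
  rw [hsum]
  calc ∑ T, μ.toFun T * ((B ∩ T).card : ℝ) = ∑ T, μ.toFun T * k := by
        refine Finset.sum_congr rfl fun T _ => ?_
        by_cases hT : μ.toFun T = 0
        · simp [hT]
        · rw [h T hT]
    _ = k := by rw [← Finset.sum_mul, μ.sum_one, one_mul]

lemma sum_edgeProbOn_inducedEdges (μ : TreePMFOn G S) (hS : S.Nonempty) :
    ∑ e ∈ inducedEdges G S, edgeProbOn μ e = S.card - 1 := by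
  refine sum_edgeProbOn_eq_of_card_inter fun T hT => ?_
  rw [Finset.inter_eq_right.mpr (μ.supp T hT).subset_inducedEdges,
    ← (μ.supp T hT).card_add_one hS]
  push_cast
  ring

end TreePMF

lemma nonneg_of_forall_mul_add_sq_nonneg {b c : ℝ}
    (h : ∀ t : ℝ, 0 < t → t ≤ 1 → 0 ≤ t * b + t ^ 2 * c) : 0 ≤ b := by
  by_contra! hb
  set t := min 1 (-b / (|c| + 1))
  have hc : 0 < |c| + 1 := by positivity
  have ht0 : 0 < t := lt_min one_pos (div_pos (neg_pos.mpr hb) hc)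
  have htc : t * (|c| + 1) ≤ -b := (le_div_iff₀ hc).mp (min_le_right _ _)
  have := h t ht0 (min_le_left _ _)
  nlinarith [le_abs_self c]

section MinNorm

variable {G : SimpleGraph V} {S : Finset V} {T : Finset (Sym2 V)}

def edgeProbNormSq (μ : TreePMFOn G S) : ℝ :=
  ∑ e ∈ inducedEdges G S, edgeProbOn μ e ^ 2

lemma exists_forall_edgeProbNormSq_le (hT : IsSpanningTreeOn G S T) :
    ∃ μ : TreePMFOn G S, ∀ ν : TreePMFOn G S, edgeProbNormSq μ ≤ edgeProbNormSq ν := by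
  set K := stdSimplex ℝ (Finset (Sym2 V)) ∩
    {p | ∀ T, ¬ IsSpanningTreeOn G S T → p T = 0}
  have hKcomp : IsCompact K := by
    refine (isCompact_stdSimplex _ _).inter_right ?_
    simp only [Set.ofPred_forall]
    refine isClosed_iInter fun T => ?_
    by_cases hT : IsSpanningTreeOn G S T
    · simp [hT]
    · simpa [hT] using isClosed_eq (continuous_apply T) continuous_const
  have hKne : (TreePMFOn.dirac hT).toFun ∈ K :=
    ⟨⟨(TreePMFOn.dirac hT).nonneg, (TreePMFOn.dirac hT).sum_one⟩,
      fun T' hT' => by_contra fun h => hT' ((TreePMFOn.dirac hT).supp T' h)⟩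
  have hcont : Continuous fun p : Finset (Sym2 V) → ℝ =>
      ∑ e ∈ inducedEdges G S, (∑ T, if e ∈ T then p T else 0) ^ 2 := by
    refine continuous_finsetSum _ fun e _ => (continuous_finsetSum _ fun T _ => ?_).pow 2
    split_ifs
    exacts [continuous_apply T, continuous_const]
  obtain ⟨p, hpK, hpmin⟩ := hKcomp.exists_isMinOn ⟨_, hKne⟩ hcont.continuousOn
  refine ⟨⟨p, hpK.1.1, fun T h => by_contra fun hT => h (hpK.2 T hT), hpK.1.2⟩, fun ν => ?_⟩
  exact hpmin ⟨⟨ν.nonneg, ν.sum_one⟩, fun T hT => by_contra fun h => hT (ν.supp T h)⟩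

lemma sum_mul_sub_nonneg_of_forall_le {μ : TreePMFOn G S}
    (hμ : ∀ ν : TreePMFOn G S, edgeProbNormSq μ ≤ edgeProbNormSq ν) (ν : TreePMFOn G S) :
    0 ≤ ∑ e ∈ inducedEdges G S, edgeProbOn μ e * (edgeProbOn ν e - edgeProbOn μ e) := by
  suffices h : 0 ≤ 2 * ∑ e ∈ inducedEdges G S, edgeProbOn μ e * (edgeProbOn ν e - edgeProbOn μ e) by
    linarith
  refine nonneg_of_forall_mul_add_sq_nonneg
    (c := ∑ e ∈ inducedEdges G S, (edgeProbOn ν e - edgeProbOn μ e) ^ 2) fun t h0 h1 => ?_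
  have hle := hμ (μ.mix ν t h0.le h1)
  have hexp : edgeProbNormSq (μ.mix ν t h0.le h1) = edgeProbNormSq μ +
      (t * (2 * ∑ e ∈ inducedEdges G S, edgeProbOn μ e * (edgeProbOn ν e - edgeProbOn μ e)) +
        t ^ 2 * ∑ e ∈ inducedEdges G S, (edgeProbOn ν e - edgeProbOn μ e) ^ 2) := by
    simp only [edgeProbNormSq, edgeProbOn_mix, Finset.mul_sum, ← Finset.sum_add_distrib]
    exact Finset.sum_congr rfl fun e _ => by ring
  linarith

/-- First-order optimality against point masses: every spanning tree has `η_μ`-weight at least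
`‖η_μ‖²`, and the trees in the support of `μ` weigh `‖η_μ‖²` on average. -/
lemma isMinSpanningTreeOn_of_forall_le {μ : TreePMFOn G S}
    (hμ : ∀ ν : TreePMFOn G S, edgeProbNormSq μ ≤ edgeProbNormSq ν) (hT : μ.toFun T ≠ 0) :
    IsMinSpanningTreeOn G S (edgeProbOn μ) T := by
  have hlow : ∀ T', IsSpanningTreeOn G S T' → edgeProbNormSq μ ≤ ∑ e ∈ T', edgeProbOn μ e := by
    intro T' hT'
    have h := sum_mul_sub_nonneg_of_forall_le hμ (TreePMFOn.dirac hT')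
    simp only [edgeProbOn_dirac, mul_sub, Finset.sum_sub_distrib, mul_ite, mul_one, mul_zero,
      Finset.sum_ite_mem, Finset.inter_eq_right.mpr hT'.subset_inducedEdges, ← sq] at h
    exact sub_nonneg.mp h
  have hzero : ∑ T, μ.toFun T * (∑ e ∈ T, edgeProbOn μ e - edgeProbNormSq μ) = 0 := by
    simp only [mul_sub, Finset.sum_sub_distrib, ← Finset.sum_mul, μ.sum_one, one_mul,
      ← sum_mul_edgeProbOn_inducedEdges, edgeProbNormSq, sq, sub_self]
  have hnn : ∀ T' ∈ Finset.univ,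
      0 ≤ μ.toFun T' * (∑ e ∈ T', edgeProbOn μ e - edgeProbNormSq μ) := by
    intro T' _
    by_cases hT' : μ.toFun T' = 0
    · simp [hT']
    · exact mul_nonneg (μ.nonneg T') (sub_nonneg.mpr (hlow T' (μ.supp T' hT')))
  have hweight : ∑ e ∈ T, edgeProbOn μ e = edgeProbNormSq μ := by
    have := (Finset.sum_eq_zero_iff_of_nonneg hnn).mp hzero T (Finset.mem_univ T)
    exact sub_eq_zero.mp ((mul_eq_zero.mp this).resolve_left hT)
  exact ⟨μ.supp T hT, fun T' hT' => hweight ▸ hlow T' hT'⟩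

end MinNorm

section Homogeneity

variable {G : SimpleGraph V} {S : Finset V}

lemma InH.one_lt_card (h : InH G S) : 1 < S.card := by
  obtain ⟨e, he⟩ := h.1
  cases e with | h u v =>
  obtain ⟨huv, hS⟩ := Finset.mem_filter.mp he
  exact Finset.one_lt_card.mpr ⟨u, hS u (Sym2.mem_mk_left u v), v, hS v (Sym2.mem_mk_right u v),
    G.ne_of_adj (mem_edgeFinset.mp huv)⟩

/-- `T ∩ F` has the same components as `F`, so it restricts to a spanning tree of each. -/
lemma card_inter_inducedEdges_add_one {F T : Finset (Sym2 V)} (hF : (↑F : Set (Sym2 V)) ⊆ G.edgeSet)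
    (hT : (fromEdgeSet (↑T : Set (Sym2 V))).IsAcyclic)
    (hreach : ∀ u w, (fromEdgeSet (↑F : Set (Sym2 V))).Reachable u w →
      (fromEdgeSet (↑(T ∩ F) : Set (Sym2 V))).Reachable u w)
    (C : (fromEdgeSet (↑F : Set (Sym2 V))).ConnectedComponent) :
    (F ∩ inducedEdges G C.supp.toFinset ∩ T).card + 1 = C.supp.toFinset.card := by
  set K := fromEdgeSet (↑(T ∩ F) : Set (Sym2 V))
  refine C.ind fun a => ?_
  have hsupp : (K.connectedComponentMk a).supp =
      ((fromEdgeSet (↑F : Set (Sym2 V))).connectedComponentMk a).supp := by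
    ext v
    simp only [ConnectedComponent.mem_supp_iff, ConnectedComponent.eq]
    exact ⟨fun h => h.mono (fromEdgeSet_mono (Finset.coe_subset.mpr Finset.inter_subset_right)),
      hreach v a⟩
  refine card_add_one_of_isTree_induce (fun e he => G.not_isDiag_of_mem_edgeSet
    (mem_edgeFinset.mp (Finset.mem_filter.mp (Finset.mem_inter.mp (Finset.mem_inter.mp he).1).2).1))
    (fun e he => (Finset.mem_filter.mp (Finset.mem_inter.mp (Finset.mem_inter.mp he).1).2).2) ?_
  rw [induce_fromEdgeSet_congr (t := ↑(T ∩ F)), Set.coe_toFinset, ← hsupp]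
  · exact ⟨(K.connectedComponentMk a).maximal_connected_induce_supp.1,
      (hT.anti (fromEdgeSet_mono (Finset.coe_subset.mpr Finset.inter_subset_left))).induce _⟩
  · intro u hu w hw
    have hE : s(u, w) ∈ F → s(u, w) ∈ inducedEdges G _ := fun h =>
      Finset.mem_filter.mpr ⟨mem_edgeFinset.mpr (hF h), fun v hv => by
        rcases Sym2.mem_iff.mp hv with rfl | rfl
        exacts [hu, hw]⟩
    simp only [Finset.coe_inter, Set.mem_inter_iff, Finset.mem_coe]
    tauto

lemma exists_inH_card_sub_one_le_mul {μ : TreePMFOn G S}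
    (hμ : ∀ ν : TreePMFOn G S, edgeProbNormSq μ ≤ edgeProbNormSq ν) {m : ℝ}
    (hm : ∀ e ∈ inducedEdges G S, m ≤ edgeProbOn μ e) {a b : V}
    (hab : s(a, b) ∈ inducedEdges G S) (habm : edgeProbOn μ s(a, b) = m) :
    ∃ S', InH G S' ∧ (S'.card : ℝ) - 1 ≤ m * (inducedEdges G S').card := by
  set F := (inducedEdges G S).filter (edgeProbOn μ · = m)
  set C := (fromEdgeSet (↑F : Set (Sym2 V))).connectedComponentMk a
  have hF : (↑F : Set (Sym2 V)) ⊆ G.edgeSet := fun e he =>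
    mem_edgeFinset.mp (Finset.mem_filter.mp (Finset.mem_filter.mp he).1).1
  have habC : s(a, b) ∈ inducedEdges G C.supp.toFinset := by
    have hadj : (fromEdgeSet (↑F : Set (Sym2 V))).Adj a b := (fromEdgeSet_adj _).mpr
      ⟨Finset.mem_filter.mpr ⟨hab, habm⟩, G.ne_of_adj (hF (Finset.mem_filter.mpr ⟨hab, habm⟩))⟩
    refine Finset.mem_filter.mpr ⟨(Finset.mem_filter.mp hab).1, fun v hv => ?_⟩
    rcases Sym2.mem_iff.mp hv with rfl | rfl
    · simp [C]
    · simpa [C, ConnectedComponent.eq] using hadj.reachable.symm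
  have hsum : ∑ e ∈ F ∩ inducedEdges G C.supp.toFinset, edgeProbOn μ e =
      C.supp.toFinset.card - 1 := by
    refine sum_edgeProbOn_eq_of_card_inter fun T hT => ?_
    have hTmin := isMinSpanningTreeOn_of_forall_le hμ hT
    rw [← card_inter_inducedEdges_add_one hF hTmin.1.2.2.1
      (fun _ _ => hTmin.reachable_inter_of_reachable hm) C]
    push_cast
    ring
  refine ⟨C.supp.toFinset, ⟨⟨_, habC⟩, ?_⟩, ?_⟩
  · rw [Set.coe_toFinset]
    exact C.connected_induce_supp_of_le fun _ _ h => hF ((fromEdgeSet_adj _).mp h).1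
  · calc (C.supp.toFinset.card : ℝ) - 1
        = ∑ e ∈ F ∩ inducedEdges G C.supp.toFinset, edgeProbOn μ e := hsum.symm
      _ = m * (F ∩ inducedEdges G C.supp.toFinset).card := by
        rw [Finset.sum_congr rfl fun e he => (Finset.mem_filter.mp (Finset.mem_inter.mp he).1).2,
          Finset.sum_const, nsmul_eq_mul, mul_comm]
      _ ≤ m * (inducedEdges G C.supp.toFinset).card :=
        mul_le_mul_of_nonneg_left (by exact_mod_cast Finset.card_le_card Finset.inter_subset_right)
          (habm ▸ edgeProbOn_nonneg μ _)

lemma IsDensest.card_sub_one_le_mul (hd : IsDensest G S) {S' : Finset V} (hS' : InH G S')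
    {m : ℝ} (hm : 0 ≤ m) (h : (S'.card : ℝ) - 1 ≤ m * (inducedEdges G S').card) :
    (S.card : ℝ) - 1 ≤ m * (inducedEdges G S).card := by
  have hS : (0 : ℝ) < S.card - 1 := by linarith [(Nat.one_lt_cast (α := ℝ)).mpr hd.1.one_lt_card]
  have hS'pos : (0 : ℝ) < S'.card - 1 := by
    linarith [(Nat.one_lt_cast (α := ℝ)).mpr hS'.one_lt_card]
  have hθ := hd.2 S' hS'
  rw [density, density, div_le_div_iff₀ hS'pos hS] at hθ
  refine le_of_mul_le_mul_right ?_ hS'pos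
  calc ((S.card : ℝ) - 1) * (S'.card - 1) ≤ m * (inducedEdges G S').card * (S.card - 1) := by
        nlinarith
    _ = m * ((inducedEdges G S').card * (S.card - 1)) := by ring
    _ ≤ m * ((inducedEdges G S).card * (S'.card - 1)) := mul_le_mul_of_nonneg_left hθ hm
    _ = m * (inducedEdges G S).card * (S'.card - 1) := by ring

theorem IsDensest.isHomogeneousOn (hd : IsDensest G S) : IsHomogeneousOn G S := by
  obtain ⟨T₀, hT₀⟩ := exists_isSpanningTreeOn hd.1.2
  obtain ⟨μ, hμ⟩ := exists_forall_edgeProbNormSq_le hT₀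
  obtain ⟨e₀, he₀, hmin⟩ := (inducedEdges G S).exists_min_image (edgeProbOn μ) hd.1.1
  cases e₀ with | h a b =>
  obtain ⟨S', hS', hS'm⟩ := exists_inH_card_sub_one_le_mul hμ hmin he₀ rfl
  have hle := hd.card_sub_one_le_mul hS' (edgeProbOn_nonneg μ _) hS'm
  refine ⟨μ, edgeProbOn μ s(a, b), fun e he =>
    ((Finset.sum_eq_sum_iff_of_le hmin).mp (le_antisymm (Finset.sum_le_sum hmin) ?_) e he).symm⟩
  rw [sum_edgeProbOn_inducedEdges μ (Finset.card_pos.mp (by linarith [hd.1.one_lt_card])),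
    Finset.sum_const, nsmul_eq_mul, mul_comm]
  exact hle

end Homogeneity

section Densest

variable {G : SimpleGraph V} {S : Finset V}

lemma inH_univ (hG : G.Connected) (hE : G.edgeFinset.Nonempty) : InH G Finset.univ := by
  refine ⟨?_, ?_⟩
  · rwa [inducedEdges, Finset.filter_true_of_mem fun e _ v _ => Finset.mem_univ v]
  · rw [Finset.coe_univ]
    exact (induceUnivIso G).connected_iff.mpr hG

lemma IsDensest.of_density_le (hd : IsDensest G S) {S' : Finset V} (hS' : InH G S')
    (h : density G S ≤ density G S') : IsDensest G S' :=
  ⟨hS', fun S'' hS'' => (hd.2 S'' hS'').trans h⟩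

lemma exists_isMinimalDensest (hS : InH G S) : ∃ S', IsMinimalDensest G S' := by
  obtain ⟨S₁, hS₁, hmax⟩ := (Finset.univ.filter (InH G)).exists_max_image (density G)
    ⟨S, Finset.mem_filter.mpr ⟨Finset.mem_univ _, hS⟩⟩
  have hd : IsDensest G S₁ := ⟨(Finset.mem_filter.mp hS₁).2,
    fun S' hS' => hmax S' (Finset.mem_filter.mpr ⟨Finset.mem_univ _, hS'⟩)⟩
  obtain ⟨S₂, hS₂, hmin⟩ := (Finset.univ.filter (IsDensest G)).exists_min_image Finset.card
    ⟨S₁, Finset.mem_filter.mpr ⟨Finset.mem_univ _, hd⟩⟩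
  refine ⟨S₂, (Finset.mem_filter.mp hS₂).2, fun S' hsub hne hS' => ?_⟩
  have := hmin S' (Finset.mem_filter.mpr ⟨Finset.mem_univ _, hS'⟩)
  exact (Finset.card_lt_card (Finset.ssubset_iff_subset_ne.mpr ⟨hsub, hne⟩)).not_ge this

lemma IsMinimalDensest.strictDensityOn (hS : IsMinimalDensest G S) : StrictDensityOn G S :=
  fun S' hsub hS' hne => (hS.1.2 S' hS').lt_of_not_ge fun h =>
    hS.2 S' hsub hne (hS.1.of_density_le hS' h)

end Densest

/-- If a finite connected simple graph `G` with at least one edge does not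
have the strict 1-density property, then a minimal 1-densest subgraph `H₀` exists, every
such `H₀` is a proper subgraph of `G`, has itself the strict 1-density property, and is
homogeneous. -/
theorem minimalDensest_exists_proper_strict_homogeneous
    {V : Type*} [Fintype V] [DecidableEq V] (G : SimpleGraph V) (hG : G.Connected)
    (hE : G.edgeFinset.Nonempty) (hstrict : ¬ StrictDensityOn G Finset.univ) :
    (∃ S : Finset V, IsMinimalDensest G S) ∧
    ∀ S : Finset V, IsMinimalDensest G S →
      S ≠ Finset.univ ∧ StrictDensityOn G S ∧ IsHomogeneousOn G S := by
  refine ⟨exists_isMinimalDensest (inH_univ hG hE), fun S hS => ?_⟩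
  refine ⟨?_, hS.strictDensityOn, hS.1.isHomogeneousOn⟩
  rintro rfl
  exact hstrict hS.strictDensityOn
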